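/- Let ν_0, ν_1 : ℕ → ℝ be the (unique) sequences satisfying ν_i(0) = ν_i(1) = 0 and, for all n ≥ 2 and i ∈ {0,1}, ν_i(n) = E[ν_0(I_n^i)] + E[ν_1(n − I_n^i)] + n, where I_n^i is binomial B(n, p_{i0}) distributed, and set f_i(n) := ν_i(n) − (1/H) n log n (with 0 log 0 := 0). Then there exists a constant C > 0 such that for both i ∈ {0,1} and all m, n ∈ ℕ, |f_i(m) − f_i(n)| ≤ C |m − n|. -/
import Mathlib


open Filter Asymptotics Real

/-- Expectation of `a` under the binomial distribution `B(n, p)`. -/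
noncomputable def binomExp (p : ℝ) (n : ℕ) (a : ℕ → ℝ) : ℝ :=
  ∑ k ∈ Finset.range (n + 1), (n.choose k : ℝ) * p ^ k * (1 - p) ^ (n - k) * a k

lemma binomExp_congr {p : ℝ} {n : ℕ} {a b : ℕ → ℝ} (h : ∀ k ≤ n, a k = b k) :
    binomExp p n a = binomExp p n b := by
  unfold binomExp
  refine Finset.sum_congr rfl fun k hk => ?_
  rw [h k (by simpa using Nat.lt_succ_iff.mp (Finset.mem_range.mp hk))]

lemma binomExp_add (p : ℝ) (n : ℕ) (a b : ℕ → ℝ) :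
    binomExp p n (fun k => a k + b k) = binomExp p n a + binomExp p n b := by
  unfold binomExp
  rw [← Finset.sum_add_distrib]
  exact Finset.sum_congr rfl fun k _ => by ring

lemma binomExp_mul (p c : ℝ) (n : ℕ) (a : ℕ → ℝ) :
    binomExp p n (fun k => c * a k) = c * binomExp p n a := by
  unfold binomExp
  rw [Finset.mul_sum]
  exact Finset.sum_congr rfl fun k _ => by ring

lemma binomExp_const (p c : ℝ) (n : ℕ) :
    binomExp p n (fun _ => c) = c := by
  unfold binomExp
  have h := add_pow p (1 - p) n
  simp only [add_sub_cancel, one_pow] at h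
  calc ∑ k ∈ Finset.range (n + 1), (n.choose k : ℝ) * p ^ k * (1 - p) ^ (n - k) * c
      = (∑ k ∈ Finset.range (n + 1), p ^ k * (1 - p) ^ (n - k) * (n.choose k : ℝ)) * c := by
        rw [Finset.sum_mul]; exact Finset.sum_congr rfl fun k _ => by ring
    _ = c := by rw [← h]; ring

lemma binomExp_mono {p : ℝ} (hp0 : 0 ≤ p) (hp1 : p ≤ 1) {n : ℕ} {a b : ℕ → ℝ}
    (h : ∀ k ≤ n, a k ≤ b k) : binomExp p n a ≤ binomExp p n b := by
  unfold binomExp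
  refine Finset.sum_le_sum fun k hk => ?_
  have hw : (0:ℝ) ≤ (n.choose k : ℝ) * p ^ k * (1 - p) ^ (n - k) := by
    have : (0:ℝ) ≤ (1 - p) := by linarith
    positivity
  exact mul_le_mul_of_nonneg_left (h k (Nat.lt_succ_iff.mp (Finset.mem_range.mp hk))) hw

lemma binomExp_succ (p : ℝ) (n : ℕ) (a : ℕ → ℝ) :
    binomExp p (n+1) a = binomExp p n (fun k => p * a (k+1) + (1-p) * a k) := by
  unfold binomExp
  rw [Finset.sum_range_succ' (fun k => ((n+1).choose k : ℝ) * p ^ k * (1 - p) ^ (n + 1 - k) * a k) (n+1)]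
  have hsplit : ∀ k ∈ Finset.range (n+1),
      (((n+1).choose (k+1) : ℝ)) * p ^ (k+1) * (1 - p) ^ (n + 1 - (k+1)) * a (k+1)
      = (n.choose k : ℝ) * p ^ k * (1 - p) ^ (n - k) * (p * a (k+1))
        + ((n.choose (k+1) : ℝ) * p ^ (k+1) * (1 - p) ^ (n + 1 - (k+1)) * a (k+1)) := by
    intro k hk
    have hk' : k ≤ n := Nat.lt_succ_iff.mp (Finset.mem_range.mp hk)
    have h1 : n + 1 - (k+1) = n - k := by omega
    rw [Nat.choose_succ_succ, h1]
    push_cast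
    ring
  rw [Finset.sum_congr rfl hsplit, Finset.sum_add_distrib]
  have h2 : ∑ k ∈ Finset.range (n+1),
      ((n.choose (k+1) : ℝ) * p ^ (k+1) * (1 - p) ^ (n + 1 - (k+1)) * a (k+1))
      = (∑ k ∈ Finset.range (n+1), (n.choose k : ℝ) * p ^ k * (1 - p) ^ (n + 1 - k) * a k)
        - (n.choose 0 : ℝ) * p ^ 0 * (1 - p) ^ (n + 1) * a 0 := by
    have ha := Finset.sum_range_succ' (fun k => (n.choose k : ℝ) * p ^ k * (1 - p) ^ (n + 1 - k) * a k) (n+1)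
    have hb := Finset.sum_range_succ (fun k => (n.choose k : ℝ) * p ^ k * (1 - p) ^ (n + 1 - k) * a k) (n+1)
    have hz : (n.choose (n+1) : ℝ) * p ^ (n+1) * (1 - p) ^ (n + 1 - (n+1)) * a (n+1) = 0 := by
      simp [Nat.choose_succ_self]
    rw [hb, hz, add_zero] at ha
    simp only [pow_zero, Nat.choose_zero_right, Nat.cast_one, Nat.sub_zero] at ha ⊢
    linarith [ha]
  rw [h2]
  have h5 : ∀ k ∈ Finset.range (n+1),
      (n.choose k : ℝ) * p ^ k * (1 - p) ^ (n + 1 - k) * a k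
      = (n.choose k : ℝ) * p ^ k * (1 - p) ^ (n - k) * ((1-p) * a k) := by
    intro k hk
    have hk' : k ≤ n := Nat.lt_succ_iff.mp (Finset.mem_range.mp hk)
    have : n + 1 - k = (n - k) + 1 := by omega
    rw [this, pow_succ]
    ring
  rw [Finset.sum_congr rfl h5]
  have h7 : ∑ k ∈ Finset.range (n+1), (n.choose k:ℝ)*p^k*(1-p)^(n-k) * ((fun k => p * a (k+1) + (1-p)*a k) k)
      = (∑ k ∈ Finset.range (n+1), (n.choose k:ℝ)*p^k*(1-p)^(n-k)*(p*a (k+1)))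
        + ∑ k ∈ Finset.range (n+1), (n.choose k:ℝ)*p^k*(1-p)^(n-k)*((1-p)*a k) := by
    rw [← Finset.sum_add_distrib]
    exact Finset.sum_congr rfl fun k _ => by simp only []; ring
  rw [h7]
  simp only [pow_zero, Nat.choose_zero_right, Nat.cast_one, Nat.sub_zero]
  ring

lemma binomExp_reflect (p : ℝ) (n : ℕ) (a : ℕ → ℝ) :
    binomExp p n (fun k => a (n - k)) = binomExp (1-p) n a := by
  unfold binomExp
  have h := Finset.sum_range_reflect
    (fun k => (n.choose k : ℝ) * p ^ k * (1 - p) ^ (n - k) * a (n - k)) (n+1)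
  simp only [Nat.add_sub_cancel] at h
  rw [← h]
  refine Finset.sum_congr rfl fun j hj => ?_
  have hj' : j ≤ n := Nat.lt_succ_iff.mp (Finset.mem_range.mp hj)
  have h2 : n - (n - j) = j := by omega
  rw [Nat.choose_symm hj', h2, show (1:ℝ)-(1-p) = p by ring]
  ring

lemma binomExp_id (p : ℝ) (n : ℕ) :
    binomExp p n (fun k => (k:ℝ)) = n * p := by
  induction n with
  | zero => simp [binomExp]
  | succ n ih =>
    calc binomExp p (n+1) (fun k => (k:ℝ))
        = binomExp p n (fun k => p * ((k+1:ℕ):ℝ) + (1-p) * (k:ℝ)) := binomExp_succ p n _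
      _ = binomExp p n (fun k => (k:ℝ) + p) := binomExp_congr (fun k _ => by push_cast; ring)
      _ = binomExp p n (fun k => (k:ℝ)) + binomExp p n (fun _ => p) := binomExp_add p n _ _
      _ = ((n+1 : ℕ):ℝ) * p := by rw [ih, binomExp_const]; push_cast; ring

lemma binomExp_single (p c : ℝ) (n : ℕ) :
    binomExp p n (fun k => if k = n then c else 0) = p ^ n * c := by
  unfold binomExp
  rw [Finset.sum_eq_single_of_mem n (Finset.self_mem_range_succ n)]
  · simp
  · intro k _ hk
    simp [hk]

lemma binomExp_inv {p : ℝ} (hp : p ≠ 0) (n : ℕ) :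
    p * binomExp p n (fun k => 1/((k:ℝ)+1)) = (1 - (1-p)^(n+1))/((n:ℝ)+1) := by
  have hn1 : ((n:ℝ)+1) ≠ 0 := by positivity
  rw [eq_div_iff hn1]
  unfold binomExp
  rw [Finset.mul_sum, Finset.sum_mul]
  have h1 : ∀ k ∈ Finset.range (n+1),
      p * ((n.choose k : ℝ) * p ^ k * (1 - p) ^ (n - k) * (1/((k:ℝ)+1))) * ((n:ℝ)+1)
      = ((n+1).choose (k+1) : ℝ) * p ^ (k+1) * (1 - p) ^ (n + 1 - (k+1)) := by
    intro k hk
    have hk' : k ≤ n := Nat.lt_succ_iff.mp (Finset.mem_range.mp hk)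
    have hch : ((n+1) * n.choose k : ℕ) = ((n+1).choose (k+1) * (k+1) : ℕ) := Nat.add_one_mul_choose_eq n k
    have hch' : ((n:ℝ)+1) * (n.choose k : ℝ) = ((n+1).choose (k+1) : ℝ) * ((k:ℝ)+1) := by
      exact_mod_cast congrArg (Nat.cast (R := ℝ)) hch
    have h1 : n + 1 - (k+1) = n - k := by omega
    have hk1 : ((k:ℝ)+1) ≠ 0 := by positivity
    rw [h1]
    field_simp
    linear_combination (p^(k+1) * (1-p)^(n-k)) * hch'
  rw [Finset.sum_congr rfl h1]
  have h2 := Finset.sum_range_succ' (fun k => ((n+1).choose k : ℝ) * p ^ k * (1 - p) ^ (n + 1 - k)) (n+1)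
  have h3 : ∑ k ∈ Finset.range (n+1+1), ((n+1).choose k : ℝ) * p ^ k * (1 - p) ^ (n + 1 - k) = 1 := by
    have h := add_pow p (1 - p) (n+1)
    simp only [add_sub_cancel, one_pow] at h
    calc ∑ k ∈ Finset.range (n+1+1), ((n+1).choose k : ℝ) * p ^ k * (1 - p) ^ (n + 1 - k)
        = ∑ k ∈ Finset.range (n+1+1), p ^ k * (1 - p) ^ (n+1-k) * ((n+1).choose k : ℝ) :=
          Finset.sum_congr rfl fun k _ => by ring
      _ = 1 := h.symm
  rw [h3] at h2
  simp only [pow_zero, Nat.choose_zero_right, Nat.cast_one, Nat.sub_zero, one_mul, mul_one] at h2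
  linarith [h2]

lemma log_tangent {x y : ℝ} (hx : 0 < x) (hy : 0 < y) :
    Real.log x ≤ Real.log y + (x - y)/y := by
  have h := Real.log_le_sub_one_of_pos (div_pos hx hy)
  rw [Real.log_div hx.ne' hy.ne'] at h
  have : x/y - 1 = (x - y)/y := by field_simp
  linarith [this ▸ h]

lemma pElog_le {r : ℝ} (hr0 : 0 < r) (hr1 : r < 1) (n : ℕ) :
    r * binomExp r n (fun k => Real.log ((k:ℝ)+2))
      ≤ r*Real.log r + r*Real.log ((n:ℝ)+2) + 2*(1-r)/((n:ℝ)+2) := by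
  set y : ℝ := r*((n:ℝ)+2) with hy_def
  have hn2 : (0:ℝ) < (n:ℝ)+2 := by positivity
  have hy : 0 < y := by positivity
  have hmono : binomExp r n (fun k => Real.log ((k:ℝ)+2))
      ≤ binomExp r n (fun k => (Real.log y + (2-y)/y) + (1/y) * (k:ℝ)) := by
    refine binomExp_mono hr0.le hr1.le fun k _ => ?_
    have hk2 : (0:ℝ) < (k:ℝ)+2 := by positivity
    have h := log_tangent hk2 hy
    have : ((k:ℝ)+2 - y)/y = (2-y)/y + (1/y)*(k:ℝ) := by field_simp; ring
    linarith [this ▸ h]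
  have hdec : binomExp r n (fun k => (Real.log y + (2-y)/y) + (1/y) * (k:ℝ))
      = (Real.log y + (2-y)/y) + (1/y) * ((n:ℝ) * r) := by
    rw [binomExp_add, binomExp_const, binomExp_mul, binomExp_id]
  rw [hdec] at hmono
  have h2 : r * ((Real.log y + (2-y)/y) + (1/y) * ((n:ℝ) * r))
      = r * Real.log y + 2*(1-r)/((n:ℝ)+2) := by
    rw [hy_def]; field_simp; ring
  have h3 : Real.log y = Real.log r + Real.log ((n:ℝ)+2) := Real.log_mul hr0.ne' hn2.ne'
  nlinarith [mul_le_mul_of_nonneg_left hmono hr0.le]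

lemma pElog_ge {r : ℝ} (hr0 : 0 < r) (hr1 : r < 1) (n : ℕ) :
    r*Real.log r + r*Real.log ((n:ℝ)+2) - r/((n:ℝ)+1)
      ≤ r * binomExp r n (fun k => Real.log ((k:ℝ)+2)) := by
  set y : ℝ := r*((n:ℝ)+2) with hy_def
  have hn2 : (0:ℝ) < (n:ℝ)+2 := by positivity
  have hn1 : (0:ℝ) < (n:ℝ)+1 := by positivity
  have hy : 0 < y := by positivity
  have hmono : binomExp r n (fun k => (Real.log y + 1) + (-y) * (1/((k:ℝ)+1)))
      ≤ binomExp r n (fun k => Real.log ((k:ℝ)+2)) := by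
    refine binomExp_mono hr0.le hr1.le fun k _ => ?_
    have hk2 : (0:ℝ) < (k:ℝ)+2 := by positivity
    have hk1 : (0:ℝ) < (k:ℝ)+1 := by positivity
    have h := log_tangent hy hk2
    have h1 : (y - ((k:ℝ)+2))/((k:ℝ)+2) = y/((k:ℝ)+2) - 1 := by field_simp
    have h2 : y/((k:ℝ)+2) ≤ y/((k:ℝ)+1) := by
      apply div_le_div_of_nonneg_left hy.le hk1; linarith
    have h3 : (-y) * (1/((k:ℝ)+1)) = -(y/((k:ℝ)+1)) := by ring
    linarith [h1 ▸ h]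
  have hdec : binomExp r n (fun k => (Real.log y + 1) + (-y) * (1/((k:ℝ)+1)))
      = (Real.log y + 1) + (-y) * binomExp r n (fun k => 1/((k:ℝ)+1)) := by
    rw [binomExp_add, binomExp_const, binomExp_mul]
  rw [hdec] at hmono
  have hI : r * binomExp r n (fun k => 1/((k:ℝ)+1)) = (1 - (1-r)^(n+1))/((n:ℝ)+1) :=
    binomExp_inv hr0.ne' n
  have hIle : r * binomExp r n (fun k => 1/((k:ℝ)+1)) ≤ 1/((n:ℝ)+1) := by
    rw [hI]
    have h1 : (0:ℝ) ≤ (1-r)^(n+1) := pow_nonneg (by linarith) (n+1)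
    exact (div_le_div_iff_of_pos_right hn1).mpr (by linarith)
  have hm2 := mul_le_mul_of_nonneg_left hmono hr0.le
  have hexp : r * ((Real.log y + 1) + (-y) * binomExp r n (fun k => 1/((k:ℝ)+1)))
      = r * Real.log y + r - y * (r * binomExp r n (fun k => 1/((k:ℝ)+1))) := by ring
  have hyI : y * (r * binomExp r n (fun k => 1/((k:ℝ)+1))) ≤ y * (1/((n:ℝ)+1)) :=
    mul_le_mul_of_nonneg_left hIle hy.le
  have hyv : y * (1/((n:ℝ)+1)) = r + r/((n:ℝ)+1) := by
    rw [hy_def]; field_simp; ring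
  have h3 : Real.log y = Real.log r + Real.log ((n:ℝ)+2) := Real.log_mul hr0.ne' hn2.ne'
  nlinarith [hm2, hexp, hyI, hyv, h3]

/-- One-branch bound used in the main induction. -/
lemma branch_bound {r θ L A T M c : ℝ} {n : ℕ} {e : ℕ → ℝ}
    (hr0 : 0 < r) (hr1 : r < 1) (hrθ : r ≤ θ) (hr'θ : 1 - r ≤ θ) (hθ : 0 ≤ θ)
    (hL : 0 ≤ L) (hA : 0 ≤ A) (hM : 0 ≤ M)
    (hpt : ∀ k ≤ n, |e k - (L * Real.log ((k:ℝ)+2) + c)|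
        ≤ T - A/((k:ℝ)+1) + (if k = n then M else 0)) :
    r * binomExp r n e
      ≤ L*(r*Real.log r) + L*(r*Real.log ((n:ℝ)+2)) + 2*L*(1-r)/((n:ℝ)+2)
        + r*(c+T) - A*(1-θ^(n+1))/((n:ℝ)+1) + θ^(n+1)*M
    ∧ L*(r*Real.log r) + L*(r*Real.log ((n:ℝ)+2)) - L*(r/((n:ℝ)+1))
        + r*(c-T) + A*(1-θ^(n+1))/((n:ℝ)+1) - θ^(n+1)*M
      ≤ r * binomExp r n e := by
  have hn1 : (0:ℝ) < (n:ℝ)+1 := by positivity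
  set S := binomExp r n (fun k => Real.log ((k:ℝ)+2)) with hS_def
  set I := binomExp r n (fun k => 1/((k:ℝ)+1)) with hI_def
  have hSle := pElog_le hr0 hr1 n
  have hSge := pElog_ge hr0 hr1 n
  have hI : r * I = (1 - (1-r)^(n+1))/((n:ℝ)+1) := binomExp_inv hr0.ne' n
  have hpow1 : (1-r)^(n+1) ≤ θ^(n+1) := pow_le_pow_left₀ (by linarith) hr'θ (n+1)
  have hpow2 : r^(n+1) ≤ θ^(n+1) := pow_le_pow_left₀ hr0.le hrθ (n+1)
  -- decomposition of the upper comparison function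
  have hdecU : binomExp r n (fun k => L * Real.log ((k:ℝ)+2) + (c+T)
        + (-A)*(1/((k:ℝ)+1)) + (if k = n then M else 0))
      = L * S + (c+T) + (-A) * I + r^n * M := by
    rw [binomExp_add, binomExp_add, binomExp_add, binomExp_mul, binomExp_mul,
      binomExp_const, binomExp_single]
  have hdecL : binomExp r n (fun k => L * Real.log ((k:ℝ)+2) + (c-T)
        + A*(1/((k:ℝ)+1)) + (if k = n then -M else 0))
      = L * S + (c-T) + A * I + r^n * (-M) := by
    rw [binomExp_add, binomExp_add, binomExp_add, binomExp_mul, binomExp_mul,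
      binomExp_const, binomExp_single]
  have hup : binomExp r n e ≤ L * S + (c+T) + (-A) * I + r^n * M := by
    rw [← hdecU]
    refine binomExp_mono hr0.le hr1.le fun k hk => ?_
    have h1 := (abs_le.mp (hpt k hk)).2
    have h2 : (-A)*(1/((k:ℝ)+1)) = -(A/((k:ℝ)+1)) := by ring
    rcases eq_or_ne k n with h | h
    · rw [if_pos h] at h1 ⊢; linarith [h1, h2]
    · rw [if_neg h] at h1 ⊢; linarith [h1, h2]
  have hlo : L * S + (c-T) + A * I + r^n * (-M) ≤ binomExp r n e := by
    rw [← hdecL]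
    refine binomExp_mono hr0.le hr1.le fun k hk => ?_
    have h1 := (abs_le.mp (hpt k hk)).1
    have h2 : A*(1/((k:ℝ)+1)) = A/((k:ℝ)+1) := by ring
    rcases eq_or_ne k n with h | h
    · rw [if_pos h] at h1 ⊢; linarith [h1, h2]
    · rw [if_neg h] at h1 ⊢; linarith [h1, h2]
  constructor
  · have h3 := mul_le_mul_of_nonneg_left hup hr0.le
    have h4 : r * (L * S + (c+T) + (-A) * I + r^n * M)
        = L * (r * S) + r*(c+T) + (-A) * (r * I) + r^(n+1) * M := by ring
    have h5 : L * (r * S) ≤ L * (r*Real.log r + r*Real.log ((n:ℝ)+2) + 2*(1-r)/((n:ℝ)+2)) :=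
      mul_le_mul_of_nonneg_left hSle hL
    have h6 : (-A) * (r * I) ≤ -(A*(1-θ^(n+1))/((n:ℝ)+1)) := by
      rw [hI]
      have : A*(1-θ^(n+1)) ≤ A * (1 - (1-r)^(n+1)) :=
        mul_le_mul_of_nonneg_left (by linarith) hA
      have hd := (div_le_div_iff_of_pos_right hn1).mpr this
      have he : (-A) * ((1 - (1-r)^(n+1))/((n:ℝ)+1)) = -(A * (1 - (1-r)^(n+1))/((n:ℝ)+1)) := by
        ring
      rw [he]
      linarith [hd]
    have h7 : r^(n+1) * M ≤ θ^(n+1) * M := mul_le_mul_of_nonneg_right hpow2 hM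
    have h8 : L * (r*Real.log r + r*Real.log ((n:ℝ)+2) + 2*(1-r)/((n:ℝ)+2))
        = L*(r*Real.log r) + L*(r*Real.log ((n:ℝ)+2)) + 2*L*(1-r)/((n:ℝ)+2) := by ring
    linarith [h3, h4 ▸ h3]
  · have h3 := mul_le_mul_of_nonneg_left hlo hr0.le
    have h4 : r * (L * S + (c-T) + A * I + r^n * (-M))
        = L * (r * S) + r*(c-T) + A * (r * I) - r^(n+1) * M := by ring
    have h5 : L * (r*Real.log r + r*Real.log ((n:ℝ)+2) - r/((n:ℝ)+1)) ≤ L * (r * S) :=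
      mul_le_mul_of_nonneg_left hSge hL
    have h6 : A*(1-θ^(n+1))/((n:ℝ)+1) ≤ A * (r * I) := by
      rw [hI]
      have : A*(1-θ^(n+1)) ≤ A * (1 - (1-r)^(n+1)) :=
        mul_le_mul_of_nonneg_left (by linarith) hA
      have hd := (div_le_div_iff_of_pos_right hn1).mpr this
      have he : A * ((1 - (1-r)^(n+1))/((n:ℝ)+1)) = A * (1 - (1-r)^(n+1))/((n:ℝ)+1) := by
        ring
      rw [he]
      linarith [hd]
    have h7 : r^(n+1) * M ≤ θ^(n+1) * M := mul_le_mul_of_nonneg_right hpow2 hM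
    have h8 : L * (r*Real.log r + r*Real.log ((n:ℝ)+2) - r/((n:ℝ)+1))
        = L*(r*Real.log r) + L*(r*Real.log ((n:ℝ)+2)) - L*(r/((n:ℝ)+1)) := by ring
    linarith [h3, h4 ▸ h3]

lemma lipschitz_of_step {g : ℕ → ℝ} {C : ℝ} (h : ∀ n, |g (n+1) - g n| ≤ C) :
    ∀ m n : ℕ, |g m - g n| ≤ C * |(m:ℝ) - (n:ℝ)| := by
  have key : ∀ (n k : ℕ), |g (n+k) - g n| ≤ C * k := by
    intro n k
    induction k with
    | zero => simp
    | succ k ih =>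
      have h1 := h (n+k)
      have h2 : |g (n+(k+1)) - g n| ≤ |g (n+k+1) - g (n+k)| + |g (n+k) - g n| := by
        have := abs_sub_le (g (n+k+1)) (g (n+k)) (g n)
        simpa [← add_assoc] using this
      calc |g (n+(k+1)) - g n| ≤ C + C*(k:ℝ) := by linarith
        _ = C * ((k+1:ℕ):ℝ) := by push_cast; ring
  intro m n
  rcases le_total n m with h' | h'
  · obtain ⟨k, rfl⟩ := Nat.exists_eq_add_of_le h'
    have h1 := key n k
    have h2 : |((n+k:ℕ):ℝ) - (n:ℝ)| = (k:ℝ) := by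
      push_cast; rw [add_sub_cancel_left, abs_of_nonneg (Nat.cast_nonneg k)]
    rw [h2]; exact h1
  · obtain ⟨k, rfl⟩ := Nat.exists_eq_add_of_le h'
    have h1 := key m k
    have h2 : |(m:ℝ) - ((m+k:ℕ):ℝ)| = (k:ℝ) := by
      push_cast
      rw [show (m:ℝ) - ((m:ℝ)+(k:ℝ)) = -(k:ℝ) by ring, abs_neg, abs_of_nonneg (Nat.cast_nonneg k)]
    rw [h2, abs_sub_comm]; exact h1

lemma phi_bound (n : ℕ) :
    |Real.log ((n:ℝ)+2) - (((n:ℝ)+1) * Real.log ((n:ℝ)+1) - (n:ℝ) * Real.log (n:ℝ))| ≤ 2 := by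
  rcases Nat.eq_zero_or_pos n with rfl | hn
  · simp only [Nat.cast_zero, zero_add, zero_mul, one_mul, Real.log_one, Real.log_zero,
      mul_zero, sub_zero, sub_self]
    rw [abs_of_nonneg (Real.log_nonneg one_le_two)]
    have := Real.log_le_sub_one_of_pos (by norm_num : (0:ℝ) < 2)
    linarith
  · have hx : (1:ℝ) ≤ (n:ℝ) := by exact_mod_cast hn
    have h0 : (0:ℝ) < (n:ℝ) := by linarith
    have h1 : (0:ℝ) < (n:ℝ)+1 := by linarith
    have h2 : (0:ℝ) < (n:ℝ)+2 := by linarith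
    have ha1 : Real.log ((n:ℝ)+2) ≤ Real.log ((n:ℝ)+1) + 1/((n:ℝ)+1) := by
      have := log_tangent h2 h1
      have he : ((n:ℝ)+2 - ((n:ℝ)+1))/((n:ℝ)+1) = 1/((n:ℝ)+1) := by ring
      linarith [he ▸ this]
    have ha0 : Real.log ((n:ℝ)+1) ≤ Real.log ((n:ℝ)+2) := Real.log_le_log h1 (by linarith)
    have hb1 : Real.log ((n:ℝ)+1) ≤ Real.log (n:ℝ) + 1/(n:ℝ) := by
      have := log_tangent h1 h0
      have he : ((n:ℝ)+1 - (n:ℝ))/(n:ℝ) = 1/(n:ℝ) := by ring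
      linarith [he ▸ this]
    have hb0 : Real.log (n:ℝ) ≤ Real.log ((n:ℝ)+1) := Real.log_le_log h0 (by linarith)
    have hnb : (n:ℝ) * (Real.log ((n:ℝ)+1) - Real.log (n:ℝ)) ≤ 1 := by
      calc (n:ℝ) * (Real.log ((n:ℝ)+1) - Real.log (n:ℝ)) ≤ (n:ℝ) * (1/(n:ℝ)) :=
            mul_le_mul_of_nonneg_left (by linarith) h0.le
        _ = 1 := by field_simp
    have hnb0 : 0 ≤ (n:ℝ) * (Real.log ((n:ℝ)+1) - Real.log (n:ℝ)) :=
      mul_nonneg h0.le (by linarith)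
    have hae : 1/((n:ℝ)+1) ≤ 1 := by
      rw [div_le_one h1]; linarith
    have hkey : Real.log ((n:ℝ)+2) - (((n:ℝ)+1) * Real.log ((n:ℝ)+1) - (n:ℝ) * Real.log (n:ℝ))
        = (Real.log ((n:ℝ)+2) - Real.log ((n:ℝ)+1))
          - (n:ℝ) * (Real.log ((n:ℝ)+1) - Real.log (n:ℝ)) := by ring
    rw [hkey]
    rw [abs_le]
    constructor <;> linarith

set_option maxHeartbeats 1600000 in
theorem stmt6 (p : Fin 2 → Fin 2 → ℝ)
    (hp : ∀ i j, p i j ∈ Set.Ioo (0 : ℝ) 1)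
    (hsum : ∀ i, p i 0 + p i 1 = 1)
    (hne : ∃ i j, p i j ≠ 1 / 2)
    (pi' H' : Fin 2 → ℝ) (H : ℝ)
    (hpi0 : pi' 0 = p 1 0 / (p 0 1 + p 1 0))
    (hpi1 : pi' 1 = p 0 1 / (p 0 1 + p 1 0))
    (hH' : ∀ i, H' i = -(p i 0 * Real.log (p i 0)) - p i 1 * Real.log (p i 1))
    (hH : H = pi' 0 * H' 0 + pi' 1 * H' 1) (hHpos : 0 < H)
    (ν : Fin 2 → ℕ → ℝ)
    (hinit : ∀ i : Fin 2, ν i 0 = 0 ∧ ν i 1 = 0)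
    (hrec : ∀ i : Fin 2, ∀ n : ℕ, 2 ≤ n →
      ν i n = binomExp (p i 0) n (ν 0) + binomExp (p i 0) n (fun k => ν 1 (n - k)) + n)
    (f : Fin 2 → ℕ → ℝ)
    (hf : ∀ i : Fin 2, ∀ n : ℕ, f i n = ν i n - 1 / H * ((n : ℝ) * Real.log n)) :
    ∃ C > (0 : ℝ), ∀ i : Fin 2, ∀ m n : ℕ,
      |f i m - f i n| ≤ C * |(m : ℝ) - (n : ℝ)| := by
  have hpos : ∀ i j, 0 < p i j := fun i j => (hp i j).1
  have hlt1 : ∀ i j, p i j < 1 := fun i j => (hp i j).2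
  have hq : ∀ i, p i 1 = 1 - p i 0 := fun i => by have := hsum i; linarith
  obtain ⟨L, hL_def⟩ : ∃ x : ℝ, x = 1/H := ⟨_, rfl⟩
  have hL : 0 < L := by rw [hL_def]; positivity
  obtain ⟨d, hd_def⟩ : ∃ x : Fin 2 → ℕ → ℝ, x = fun i n => ν i (n+1) - ν i n := ⟨_, rfl⟩
  -- recurrence for increments
  have hdrec : ∀ (i : Fin 2) (n : ℕ), 2 ≤ n →
      d i n = 1 + p i 0 * binomExp (p i 0) n (d 0) + p i 1 * binomExp (p i 1) n (d 1) := by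
    intro i n hn
    have e0 := hrec i n hn
    have e1 := hrec i (n+1) (by omega)
    rw [binomExp_succ, binomExp_succ] at e1
    have c1 : binomExp (p i 0) n (fun k => p i 0 * ν 0 (k+1) + (1 - p i 0) * ν 0 k)
        = binomExp (p i 0) n (ν 0) + p i 0 * binomExp (p i 0) n (d 0) := by
      calc binomExp (p i 0) n (fun k => p i 0 * ν 0 (k+1) + (1 - p i 0) * ν 0 k)
          = binomExp (p i 0) n (fun k => ν 0 k + p i 0 * d 0 k) :=
            binomExp_congr fun k _ => by simp only [hd_def]; ring
        _ = _ := by rw [binomExp_add, binomExp_mul]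
    have c2 : binomExp (p i 0) n (fun k => p i 0 * ν 1 (n+1-(k+1)) + (1 - p i 0) * ν 1 (n+1-k))
        = binomExp (p i 0) n (fun k => ν 1 (n-k)) + p i 1 * binomExp (p i 1) n (d 1) := by
      calc binomExp (p i 0) n (fun k => p i 0 * ν 1 (n+1-(k+1)) + (1 - p i 0) * ν 1 (n+1-k))
          = binomExp (p i 0) n (fun k => ν 1 (n-k) + (1 - p i 0) * d 1 (n-k)) := by
            refine binomExp_congr fun k hk => ?_
            have h1 : n+1-(k+1) = n-k := by omega
            have h2 : n+1-k = (n-k)+1 := by omega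
            rw [h1, h2]; simp only [hd_def]; ring
        _ = binomExp (p i 0) n (fun k => ν 1 (n-k))
              + (1 - p i 0) * binomExp (p i 0) n (fun k => d 1 (n-k)) := by
            rw [binomExp_add, binomExp_mul]
        _ = _ := by rw [binomExp_reflect, binomExp_reflect, ← hq i]
    rw [c1, c2] at e1
    have hdin : d i n = ν i (n+1) - ν i n := by rw [hd_def]
    push_cast at e1
    linarith [e0, e1, hdin]
  -- Poisson-equation constants
  have hp01 : (0:ℝ) < p 0 1 := hpos 0 1
  have hp10 : (0:ℝ) < p 1 0 := hpos 1 0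
  obtain ⟨b0, hb0_def⟩ : ∃ x : ℝ, x = (1 - H' 0 / H)/(p 0 1) := ⟨_, rfl⟩
  obtain ⟨b, hbv0, hbv1⟩ : ∃ x : Fin 2 → ℝ, x 0 = b0 ∧ x 1 = 0 := ⟨![b0, 0], rfl, rfl⟩
  have hHeq : H * (p 0 1 + p 1 0) = p 1 0 * H' 0 + p 0 1 * H' 1 := by
    rw [hH, hpi0, hpi1]; field_simp
  have hb : ∀ i : Fin 2, b i - (p i 0 * b 0 + p i 1 * b 1) = 1 - H' i / H := by
    intro i
    fin_cases i
    · show b 0 - (p 0 0 * b 0 + p 0 1 * b 1) = 1 - H' 0 / H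
      rw [hbv0, hbv1]
      have h00 : p 0 0 = 1 - p 0 1 := by have := hsum 0; linarith
      rw [h00, hb0_def]
      field_simp
      ring
    · show b 1 - (p 1 0 * b 0 + p 1 1 * b 1) = 1 - H' 1 / H
      rw [hbv0, hbv1]
      have e1 : p 0 1 * b0 = 1 - H' 0 / H := by
        rw [hb0_def]; field_simp
      have e2 : p 1 0 * (H' 0 / H) + p 0 1 * (H' 1 / H) = p 0 1 + p 1 0 := by
        field_simp
        linarith [hHeq]
      have e3 : p 0 1 * (0 - (p 1 0 * b0 + p 1 1 * 0)) = p 0 1 * (1 - H' 1 / H) := by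
        linear_combination (-(p 1 0)) * e1 + e2
      exact mul_left_cancel₀ hp01.ne' e3
  -- contraction constants
  obtain ⟨θ, hθ_def⟩ : ∃ x : ℝ, x = max (max (p 0 0) (p 0 1)) (max (p 1 0) (p 1 1)) := ⟨_, rfl⟩
  have hθb : ∀ i j, p i j ≤ θ := by
    intro i j
    rw [hθ_def]
    fin_cases i <;> fin_cases j
    · exact le_max_of_le_left (le_max_left _ _)
    · exact le_max_of_le_left (le_max_right _ _)
    · exact le_max_of_le_right (le_max_left _ _)
    · exact le_max_of_le_right (le_max_right _ _)
  have hθ1 : θ < 1 := by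
    rw [hθ_def]; exact max_lt (max_lt (hlt1 0 0) (hlt1 0 1)) (max_lt (hlt1 1 0) (hlt1 1 1))
  have hθ0 : 0 < θ := lt_of_lt_of_le (hpos 0 0) (hθb 0 0)
  obtain ⟨N₀, hN₀⟩ := exists_pow_lt_of_lt_one (by norm_num : (0:ℝ) < 1/4) hθ1
  obtain ⟨N, hN_def⟩ : ∃ x : ℕ, x = max N₀ 2 := ⟨_, rfl⟩
  have hN2 : 2 ≤ N := by rw [hN_def]; exact le_max_right _ _
  have hθN : θ ^ N ≤ 1/4 := by
    rw [hN_def]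
    exact le_of_lt (lt_of_le_of_lt (pow_le_pow_of_le_one hθ0.le hθ1.le (le_max_left N₀ 2)) hN₀)
  obtain ⟨A, hA_def⟩ : ∃ x : ℝ, x = 4*L + 1 := ⟨_, rfl⟩
  have hA : 0 < A := by rw [hA_def]; linarith
  obtain ⟨T, hT_def⟩ : ∃ x : ℝ, x = A + |b 0| + |b 1| + L * Real.log ((N:ℝ)+2)
      + (∑ k ∈ Finset.range N, (|d 0 k| + |d 1 k|)) + 1 := ⟨_, rfl⟩
  have hsumnn : 0 ≤ ∑ k ∈ Finset.range N, (|d 0 k| + |d 1 k|) :=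
    Finset.sum_nonneg fun k _ => by positivity
  have hlogN : 0 ≤ Real.log ((N:ℝ)+2) := Real.log_nonneg (by
    have : (0:ℝ) ≤ (N:ℝ) := Nat.cast_nonneg N
    linarith)
  have hT1 : A + 1 ≤ T := by
    have h1 : 0 ≤ |b 0| := abs_nonneg _
    have h2 : 0 ≤ |b 1| := abs_nonneg _
    have h3 : 0 ≤ L * Real.log ((N:ℝ)+2) := mul_nonneg hL.le hlogN
    rw [hT_def]; linarith
  -- the main estimate
  have main : ∀ n : ℕ, ∀ i : Fin 2,
      |d i n - (L * Real.log ((n:ℝ)+2) + b i)| ≤ T - A/((n:ℝ)+1) := by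
    intro n
    induction n using Nat.strong_induction_on with
    | _ n ih =>
    rcases lt_or_ge n N with hn | hn
    · -- base case: n < N
      intro i
      have hmem : n ∈ Finset.range N := Finset.mem_range.mpr hn
      have h1 : |d i n| ≤ ∑ k ∈ Finset.range N, (|d 0 k| + |d 1 k|) := by
        have h2 : |d i n| ≤ |d 0 n| + |d 1 n| := by
          fin_cases i
          · have := abs_nonneg (d 1 n); show |d 0 n| ≤ _; linarith
          · have := abs_nonneg (d 0 n); show |d 1 n| ≤ _; linarith
        exact le_trans h2
          (Finset.single_le_sum (f := fun k => |d 0 k| + |d 1 k|) (fun k _ => by positivity) hmem)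
      have hnN : (n:ℝ) ≤ (N:ℝ) := by exact_mod_cast hn.le
      have h2 : Real.log ((n:ℝ)+2) ≤ Real.log ((N:ℝ)+2) :=
        Real.log_le_log (by positivity) (by linarith)
      have h3 : 0 ≤ Real.log ((n:ℝ)+2) := Real.log_nonneg (by
        have : (0:ℝ) ≤ (n:ℝ) := Nat.cast_nonneg n
        linarith)
      have h4 : A/((n:ℝ)+1) ≤ A := by
        have hd1 : (1:ℝ) ≤ (n:ℝ)+1 := by
          have : (0:ℝ) ≤ (n:ℝ) := Nat.cast_nonneg n
          linarith
        calc A/((n:ℝ)+1) ≤ A/1 := div_le_div_of_nonneg_left hA.le one_pos hd1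
          _ = A := div_one A
      have h5 : |b i| ≤ |b 0| + |b 1| := by
        fin_cases i
        · have := abs_nonneg (b 1); show |b 0| ≤ _; linarith
        · have := abs_nonneg (b 0); show |b 1| ≤ _; linarith
      have habs : |d i n - (L * Real.log ((n:ℝ)+2) + b i)|
          ≤ |d i n| + (L * Real.log ((n:ℝ)+2) + |b i|) := by
        calc |d i n - (L * Real.log ((n:ℝ)+2) + b i)|
            ≤ |d i n| + |L * Real.log ((n:ℝ)+2) + b i| := by
              rw [sub_eq_add_neg]
              exact (abs_add_le _ _).trans (by rw [abs_neg])
          _ ≤ |d i n| + (L * Real.log ((n:ℝ)+2) + |b i|) := by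
              have h7 := abs_add_le (L * Real.log ((n:ℝ)+2)) (b i)
              have h6 : |L * Real.log ((n:ℝ)+2)| = L * Real.log ((n:ℝ)+2) :=
                abs_of_nonneg (mul_nonneg hL.le h3)
              rw [h6] at h7
              linarith
      have hLlog : L * Real.log ((n:ℝ)+2) ≤ L * Real.log ((N:ℝ)+2) :=
        mul_le_mul_of_nonneg_left h2 hL.le
      rw [hT_def]
      linarith
    · -- inductive step: N ≤ n
      have hn2 : 2 ≤ n := le_trans hN2 hn
      have hθn1 : θ^(n+1) ≤ 1/4 :=
        le_trans (pow_le_pow_of_le_one hθ0.le hθ1.le (by omega)) hθN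
      obtain ⟨m, hm_def⟩ : ∃ x : ℝ, x = max (|d 0 n - (L * Real.log ((n:ℝ)+2) + b 0)| - (T - A/((n:ℝ)+1)))
          (|d 1 n - (L * Real.log ((n:ℝ)+2) + b 1)| - (T - A/((n:ℝ)+1))) := ⟨_, rfl⟩
      obtain ⟨M, hM_def⟩ : ∃ x : ℝ, x = max m 0 := ⟨_, rfl⟩
      have hM0 : 0 ≤ M := by rw [hM_def]; exact le_max_right m 0
      have hn1pos : (0:ℝ) < (n:ℝ)+1 := by positivity
      have hn2pos : (0:ℝ) < (n:ℝ)+2 := by positivity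
      -- pointwise bound feeding the branch lemma
      have hpt : ∀ (j : Fin 2) k, k ≤ n → |d j k - (L * Real.log ((k:ℝ)+2) + b j)|
          ≤ T - A/((k:ℝ)+1) + (if k = n then M else 0) := by
        intro j k hk
        rcases lt_or_eq_of_le hk with hlt | heq
        · rw [if_neg (by omega)]
          have := ih k hlt j
          linarith
        · subst heq
          rw [if_pos rfl]
          have hj : |d j k - (L * Real.log ((k:ℝ)+2) + b j)| - (T - A/((k:ℝ)+1)) ≤ m := by
            rw [hm_def]
            fin_cases j
            · exact le_max_left _ _
            · exact le_max_right _ _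
          have : m ≤ M := by rw [hM_def]; exact le_max_left m 0
          linarith
      -- branch bounds
      have key : ∀ i : Fin 2, |d i n - (L * Real.log ((n:ℝ)+2) + b i)|
          ≤ T - A/((n:ℝ)+1) + M/2 := by
        intro i
        have hP0 : 0 < p i 0 := hpos i 0
        have hP1 : p i 0 < 1 := hlt1 i 0
        have hQ0 : 0 < p i 1 := hpos i 1
        have hQ1 : p i 1 < 1 := hlt1 i 1
        have hPQ : p i 0 + p i 1 = 1 := hsum i
        have hB0 := branch_bound (r := p i 0) (θ := θ) (L := L) (A := A) (T := T) (M := M)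
          (c := b 0) (n := n) (e := d 0) hP0 hP1 (hθb i 0)
          (by have := hθb i 1; have := hq i; linarith) hθ0.le hL.le hA.le hM0 (hpt 0)
        have hB1 := branch_bound (r := p i 1) (θ := θ) (L := L) (A := A) (T := T) (M := M)
          (c := b 1) (n := n) (e := d 1) hQ0 hQ1 (hθb i 1)
          (by have := hθb i 0; have := hq i; linarith) hθ0.le hL.le hA.le hM0 (hpt 1)
        have hrecn := hdrec i n hn2
        have hHi : p i 0 * Real.log (p i 0) + p i 1 * Real.log (p i 1) = -H' i := by
          rw [hH' i]; ring
        have hb' : p i 0 * b 0 + p i 1 * b 1 = b i - 1 + L * H' i := by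
          have h1 := hb i
          have h2 : H' i / H = L * H' i := by rw [hL_def]; ring
          linarith
        -- arithmetic slack facts
        have hθMn : θ^(n+1) * M ≤ M/4 := by
          have h := mul_le_mul_of_nonneg_right hθn1 hM0
          linarith
        have hdiv1 : 2*L/((n:ℝ)+2) ≤ 2*L/((n:ℝ)+1) :=
          div_le_div_of_nonneg_left (by linarith) hn1pos (by linarith)
        have hnum : 0 ≤ A - 2*A*θ^(n+1) - 2*L := by
          have h := mul_le_mul_of_nonneg_left hθn1 (by linarith : (0:ℝ) ≤ 2*A)
          rw [hA_def]
          rw [hA_def] at h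
          linarith
        have hslack : 2*A*(1-θ^(n+1))/((n:ℝ)+1) - A/((n:ℝ)+1) - 2*L/((n:ℝ)+1)
            = (A - 2*A*θ^(n+1) - 2*L)/((n:ℝ)+1) := by ring
        have hslack0 : 0 ≤ 2*A*(1-θ^(n+1))/((n:ℝ)+1) - A/((n:ℝ)+1) - 2*L/((n:ℝ)+1) := by
          rw [hslack]; exact div_nonneg hnum hn1pos.le
        -- combine the two branch upper bounds
        have hup : d i n - (L * Real.log ((n:ℝ)+2) + b i) ≤ T - A/((n:ℝ)+1) + M/2 := by
          have u0 := hB0.1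
          have u1 := hB1.1
          have hcomb : (L*(p i 0*Real.log (p i 0)) + L*(p i 0*Real.log ((n:ℝ)+2))
                + 2*L*(1-p i 0)/((n:ℝ)+2) + p i 0*(b 0+T) - A*(1-θ^(n+1))/((n:ℝ)+1) + θ^(n+1)*M)
              + (L*(p i 1*Real.log (p i 1)) + L*(p i 1*Real.log ((n:ℝ)+2))
                + 2*L*(1-p i 1)/((n:ℝ)+2) + p i 1*(b 1+T) - A*(1-θ^(n+1))/((n:ℝ)+1) + θ^(n+1)*M)
              = -(L * H' i) + L*Real.log ((n:ℝ)+2) + 2*L/((n:ℝ)+2)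
                + (p i 0 * b 0 + p i 1 * b 1) + T
                - 2*A*(1-θ^(n+1))/((n:ℝ)+1) + 2*(θ^(n+1)*M) := by
            linear_combination (L) * hHi + (L*Real.log ((n:ℝ)+2) + T - 2*L/((n:ℝ)+2)) * hPQ
          have s0 := add_le_add u0 u1
          rw [hcomb] at s0
          have t1 : d i n ≤ 1 + (-(L * H' i) + L*Real.log ((n:ℝ)+2) + 2*L/((n:ℝ)+2)
              + (p i 0 * b 0 + p i 1 * b 1) + T
              - 2*A*(1-θ^(n+1))/((n:ℝ)+1) + 2*(θ^(n+1)*M)) := by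
            linarith only [hrecn, s0]
          linarith [t1, hb', hθMn, hdiv1, hslack0]
        -- combine the two branch lower bounds
        have hlo : -(T - A/((n:ℝ)+1) + M/2) ≤ d i n - (L * Real.log ((n:ℝ)+2) + b i) := by
          have u0 := hB0.2
          have u1 := hB1.2
          have hcomb : (L*(p i 0*Real.log (p i 0)) + L*(p i 0*Real.log ((n:ℝ)+2))
                - L*(p i 0/((n:ℝ)+1)) + p i 0*(b 0-T) + A*(1-θ^(n+1))/((n:ℝ)+1) - θ^(n+1)*M)
              + (L*(p i 1*Real.log (p i 1)) + L*(p i 1*Real.log ((n:ℝ)+2))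
                - L*(p i 1/((n:ℝ)+1)) + p i 1*(b 1-T) + A*(1-θ^(n+1))/((n:ℝ)+1) - θ^(n+1)*M)
              = -(L * H' i) + L*Real.log ((n:ℝ)+2) - L/((n:ℝ)+1)
                + (p i 0 * b 0 + p i 1 * b 1) - T
                + 2*A*(1-θ^(n+1))/((n:ℝ)+1) - 2*(θ^(n+1)*M) := by
            linear_combination (L) * hHi
              + (L*Real.log ((n:ℝ)+2) - T - L/((n:ℝ)+1)) * hPQ
          have s0 := add_le_add u0 u1
          rw [hcomb] at s0
          have t1 : 1 + (-(L * H' i) + L*Real.log ((n:ℝ)+2) - L/((n:ℝ)+1)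
              + (p i 0 * b 0 + p i 1 * b 1) - T
              + 2*A*(1-θ^(n+1))/((n:ℝ)+1) - 2*(θ^(n+1)*M)) ≤ d i n := by
            linarith only [hrecn, s0]
          have hdiv2 : L/((n:ℝ)+1) ≤ 2*L/((n:ℝ)+1) :=
            (div_le_div_iff_of_pos_right hn1pos).mpr (by linarith)
          linarith [t1, hb', hθMn, hslack0, hdiv2]
        exact abs_le.mpr ⟨hlo, hup⟩
      -- close the induction via the maximum trick
      have k0 := key 0
      have k1 := key 1
      have hmhalf : m ≤ M/2 := by
        rw [hm_def]; exact max_le (by linarith) (by linarith)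
      have hm0 : m ≤ 0 := by
        rcases le_or_gt m 0 with h | h
        · exact h
        · have hMm : M = m := by rw [hM_def]; exact max_eq_left h.le
          rw [hMm] at hmhalf
          linarith
      intro i
      have : |d i n - (L * Real.log ((n:ℝ)+2) + b i)| - (T - A/((n:ℝ)+1)) ≤ m := by
        rw [hm_def]
        fin_cases i
        · exact le_max_left _ _
        · exact le_max_right _ _
      linarith
  -- translate to a step bound for f
  have hdbound : ∀ (i : Fin 2) (n : ℕ),
      |d i n - (L * Real.log ((n:ℝ)+2) + b i)| ≤ T := by
    intro i n
    have h1 := main n i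
    have h2 : 0 ≤ A/((n:ℝ)+1) := by positivity
    linarith
  have habsb : ∀ i : Fin 2, |b i| ≤ |b 0| + |b 1| := by
    intro i
    fin_cases i
    · have := abs_nonneg (b 1); show |b 0| ≤ _; linarith
    · have := abs_nonneg (b 0); show |b 1| ≤ _; linarith
  have hstep : ∀ (i : Fin 2) (n : ℕ),
      |f i (n+1) - f i n| ≤ T + (|b 0| + |b 1|) + 2*L := by
    intro i n
    have hdin : d i n = ν i (n+1) - ν i n := by rw [hd_def]
    have h1 : f i (n+1) - f i n = (d i n - (L * Real.log ((n:ℝ)+2) + b i)) + b i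
        + L * (Real.log ((n:ℝ)+2) - (((n:ℝ)+1) * Real.log ((n:ℝ)+1) - (n:ℝ) * Real.log (n:ℝ))) := by
      rw [hf i (n+1), hf i n, ← hL_def, hdin]
      push_cast
      ring
    have h2 := phi_bound n
    have h3 : |L * (Real.log ((n:ℝ)+2) - (((n:ℝ)+1) * Real.log ((n:ℝ)+1) - (n:ℝ) * Real.log (n:ℝ)))|
        ≤ L * 2 := by
      rw [abs_mul, abs_of_pos hL]
      exact mul_le_mul_of_nonneg_left h2 hL.le
    have h4 := hdbound i n
    have h5 := habsb i
    rw [h1]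
    calc |(d i n - (L * Real.log ((n:ℝ)+2) + b i)) + b i
        + L * (Real.log ((n:ℝ)+2) - (((n:ℝ)+1) * Real.log ((n:ℝ)+1) - (n:ℝ) * Real.log (n:ℝ)))|
        ≤ |(d i n - (L * Real.log ((n:ℝ)+2) + b i)) + b i|
          + |L * (Real.log ((n:ℝ)+2) - (((n:ℝ)+1) * Real.log ((n:ℝ)+1) - (n:ℝ) * Real.log (n:ℝ)))| :=
          abs_add_le _ _
      _ ≤ T + (|b 0| + |b 1|) + 2*L := by
          have h6 := abs_add_le (d i n - (L * Real.log ((n:ℝ)+2) + b i)) (b i)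
          linarith
  refine ⟨T + (|b 0| + |b 1|) + 2*L + 1, ?_, ?_⟩
  · have h1 : 0 ≤ |b 0| := abs_nonneg _
    have h2 : 0 ≤ |b 1| := abs_nonneg _
    linarith
  · intro i mm nn
    exact lipschitz_of_step (fun n => by linarith [hstep i n]) mm nn
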